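/- Let X be a 4×4 complex matrix and A, B be 2×2 complex matrices, and set X' = (A ⊗ B) X. Then the multiset of singular values of X'ᵀ (σ₂ ⊗ σ₂) X' equals |det(A)| · |det(B)| times the multiset of singular values of Xᵀ (σ₂ ⊗ σ₂) X. -/

import Mathlib

open Matrix Complex Kronecker
open scoped ComplexOrder

noncomputable section

/-- The Pauli matrix σ₀ (the 2×2 identity). -/
def pauli0 : Matrix (Fin 2) (Fin 2) ℂ := 1
/-- The Pauli matrix σ₁. -/
def pauli1 : Matrix (Fin 2) (Fin 2) ℂ := !![0, 1; 1, 0]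
/-- The Pauli matrix σ₂. -/
def pauli2 : Matrix (Fin 2) (Fin 2) ℂ := !![0, -I; I, 0]
/-- The Pauli matrix σ₃. -/
def pauli3 : Matrix (Fin 2) (Fin 2) ℂ := !![1, 0; 0, -1]

/-- The four Pauli matrices. -/
def pauli : Fin 4 → Matrix (Fin 2) (Fin 2) ℂ := ![pauli0, pauli1, pauli2, pauli3]

/-- Kronecker product of two 2×2 complex matrices as a 4×4 matrix, with
entry `(2i+j, 2k+l)` equal to `A i k * B j l`. -/
def kron (A B : Matrix (Fin 2) (Fin 2) ℂ) : Matrix (Fin 4) (Fin 4) ℂ :=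
  Matrix.reindex finProdFinEquiv finProdFinEquiv (A ⊗ₖ B)

/-- The Lorentz metric matrix `diag(1,-1,-1,-1)`. -/
def Mmetric : Matrix (Fin 4) (Fin 4) ℝ := Matrix.diagonal ![1, -1, -1, -1]

/-- A real 4×4 matrix is a proper orthochronous Lorentz transformation if
`L M Lᵀ = M`, `det L = 1` and `L₀₀ > 0`. -/
def IsProperOrthochronousLorentz (L : Matrix (Fin 4) (Fin 4) ℝ) : Prop :=
  L * Mmetric * Lᵀ = Mmetric ∧ L.det = 1 ∧ 0 < L 0 0

/-- The matrix `T` transforming the density-matrix picture to the `R`-picture. -/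
def Tmat : Matrix (Fin 4) (Fin 4) ℂ :=
  ((Real.sqrt 2 : ℂ))⁻¹ • !![1, 0, 0, 1; 0, 1, 1, 0; 0, I, -I, 0; 1, 0, 0, -1]

/-- The real parameterization `R(ρ)ᵢⱼ = Tr(ρ (σᵢ ⊗ σⱼ))` of a 4×4 matrix. -/
def Rmat (ρ : Matrix (Fin 4) (Fin 4) ℂ) : Matrix (Fin 4) (Fin 4) ℂ :=
  fun i j => Matrix.trace (ρ * kron (pauli i) (pauli j))

/-- The Lorentz transformation `L(A) = T (A ⊗ A̅) T† / |det A|` associated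
with a 2×2 matrix `A`. -/
def Lmat (A : Matrix (Fin 2) (Fin 2) ℂ) : Matrix (Fin 4) (Fin 4) ℂ :=
  (((‖A.det‖ : ℝ) : ℂ))⁻¹ • (Tmat * kron A (A.map (starRingEnd ℂ)) * Tmatᴴ)

/-- The singular values of a 4×4 complex matrix: the nonnegative square roots of
the eigenvalues of `Mᴴ M`. -/
def singularValues (M : Matrix (Fin 4) (Fin 4) ℂ) : Fin 4 → ℝ :=
  fun i => Real.sqrt ((Matrix.isHermitian_conjTranspose_mul_self M).eigenvalues i)

/-- The multiset of singular values of a 4×4 complex matrix. -/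
def singularValuesMultiset (M : Matrix (Fin 4) (Fin 4) ℂ) : Multiset ℝ :=
  Finset.univ.val.map (singularValues M)

/-- The square root of a positive semidefinite matrix, as in the older Mathlib
(`Matrix.PosSemidef.sqrt`, since removed). -/
def Matrix.PosSemidef.sqrt {ρ : Matrix (Fin 4) (Fin 4) ℂ} (hA : ρ.PosSemidef) :
    Matrix (Fin 4) (Fin 4) ℂ :=
  hA.1.eigenvectorUnitary.1 * diagonal ((↑) ∘ Real.sqrt ∘ hA.1.eigenvalues) *
    (star hA.1.eigenvectorUnitary : Matrix (Fin 4) (Fin 4) ℂ)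

open scoped Classical in
/-- The concurrence of a two-qubit state `ρ`:
`max (0, τ₁ - τ₂ - τ₃ - τ₄) = max (0, 2 max τᵢ - ∑ τᵢ)` where the `τᵢ` are the
singular values of `Xᵀ (σ₂ ⊗ σ₂) X` with `ρ = X Xᴴ` (here `X = √ρ`). -/
def concurrence (ρ : Matrix (Fin 4) (Fin 4) ℂ) : ℝ :=
  if h : ρ.PosSemidef then
    let τ := singularValues (h.sqrtᵀ * kron pauli2 pauli2 * h.sqrt)
    max 0 (2 * Finset.univ.sup' Finset.univ_nonempty τ - ∑ i, τ i)
  else 0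

/-- A two-qubit density matrix: positive semidefinite with trace 1. -/
def IsDensityMatrix (ρ : Matrix (Fin 4) (Fin 4) ℂ) : Prop :=
  ρ.PosSemidef ∧ ρ.trace = 1

/-- The reshuffled matrix `X̃` with `X̃_{2k+l,2k'+l'} = X_{2k+k',2l+l'}`. -/
def reshuffle (X : Matrix (Fin 4) (Fin 4) ℂ) : Matrix (Fin 4) (Fin 4) ℂ :=
  fun i j =>
    X ⟨2 * (i.val / 2) + j.val / 2, by have := i.isLt; have := j.isLt; omega⟩
      ⟨2 * (i.val % 2) + j.val % 2, by have := i.isLt; have := j.isLt; omega⟩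

/-- The partial transpose on the second qubit:
`(ρ^PT)_{2i+j,2k+l} = ρ_{2i+l,2k+j}`. -/
def ptranspose (ρ : Matrix (Fin 4) (Fin 4) ℂ) : Matrix (Fin 4) (Fin 4) ℂ :=
  fun a b =>
    ρ ⟨2 * (a.val / 2) + b.val % 2, by have := a.isLt; have := b.isLt; omega⟩
      ⟨2 * (b.val / 2) + a.val % 2, by have := a.isLt; have := b.isLt; omega⟩



section AuxLemmas
open Polynomial

private lemma charpoly_mul_mul (U D V : Matrix (Fin 4) (Fin 4) ℂ) (h1 : U * V = 1)
    (h2 : V * U = 1) : (U * D * V).charpoly = D.charpoly := by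
  have hc : charmatrix (U * D * V) = (U.map C) * charmatrix D * (V.map C) := by
    rw [charmatrix, charmatrix]
    rw [Matrix.mul_sub, Matrix.sub_mul]
    congr 1
    · symm
      calc (U.map C) * Matrix.scalar (Fin 4) (X : ℂ[X]) * (V.map C)
          = Matrix.scalar (Fin 4) (X : ℂ[X]) * ((U.map C) * (V.map C)) := by
            rw [← (Matrix.scalar_commute (X:ℂ[X]) (fun r => Commute.all _ _) (U.map C)).eq,
              mul_assoc]
        _ = Matrix.scalar (Fin 4) (X : ℂ[X]) := by
            rw [← Matrix.map_mul, h1, Matrix.map_one _ (map_zero C) (map_one C), mul_one]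
    · simp only [RingHom.mapMatrix_apply, Matrix.map_mul]
  unfold Matrix.charpoly
  rw [hc, det_mul, det_mul, mul_comm, ← mul_assoc, ← det_mul, ← Matrix.map_mul, h2,
    Matrix.map_one _ (map_zero C) (map_one C), det_one, one_mul]

private lemma roots_conj_diag (U : Matrix (Fin 4) (Fin 4) ℂ)
    (hU : U ∈ Matrix.unitaryGroup (Fin 4) ℂ) (d : Fin 4 → ℝ) :
    (U * Matrix.diagonal (Complex.ofReal ∘ d) * star U).charpoly.roots
      = Finset.univ.val.map (fun i => (d i : ℂ)) := by
  rw [charpoly_mul_mul _ _ _ (Matrix.mem_unitaryGroup_iff.mp hU)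
    (Matrix.mem_unitaryGroup_iff'.mp hU)]
  rw [Matrix.charpoly_of_upperTriangular _ (Matrix.blockTriangular_diagonal _)]
  have : (∏ i : Fin 4, (X - C ((Matrix.diagonal (Complex.ofReal ∘ d)) i i)))
      = ((Finset.univ.val.map (fun i => (d i : ℂ))).map (fun a => X - C a)).prod := by
    rw [Multiset.map_map]
    rfl
  rw [this, Polynomial.roots_multiset_prod_X_sub_C]

private lemma eig_multiset (A : Matrix (Fin 4) (Fin 4) ℂ) (hA : A.IsHermitian) :
    Finset.univ.val.map (fun i => (hA.eigenvalues i : ℂ)) = A.charpoly.roots := by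
  conv_rhs => rw [hA.spectral_theorem]
  exact (roots_conj_diag _ hA.eigenvectorUnitary.2 hA.eigenvalues).symm

private lemma eig_smul (r : ℝ) (A : Matrix (Fin 4) (Fin 4) ℂ) (hA : A.IsHermitian)
    (h2 : ((r:ℂ) • A).IsHermitian) :
    Finset.univ.val.map h2.eigenvalues = Finset.univ.val.map (fun i => r * hA.eigenvalues i) := by
  apply Multiset.map_injective Complex.ofReal_injective
  rw [Multiset.map_map, Multiset.map_map]
  have hdecomp : (r:ℂ) • A = (hA.eigenvectorUnitary : Matrix (Fin 4) (Fin 4) ℂ)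
      * Matrix.diagonal (Complex.ofReal ∘ fun i => r * hA.eigenvalues i)
      * star (hA.eigenvectorUnitary : Matrix (Fin 4) (Fin 4) ℂ) := by
    have hdiag : Matrix.diagonal (Complex.ofReal ∘ fun i => r * hA.eigenvalues i)
        = (r:ℂ) • Matrix.diagonal (RCLike.ofReal ∘ hA.eigenvalues) := by
      ext i j
      by_cases h : i = j
      · subst h; simp [Matrix.diagonal_apply_eq, Complex.real_smul]
      · simp [Matrix.diagonal_apply_ne _ h, h]
    conv_lhs => rw [hA.spectral_theorem]
    rw [hdiag, Matrix.mul_smul, Matrix.smul_mul, Unitary.conjStarAlgAut_apply]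
  have h1 := eig_multiset _ h2
  rw [show ((fun i => (h2.eigenvalues i : ℂ))) = Complex.ofReal ∘ h2.eigenvalues from rfl] at h1
  rw [h1]
  conv_lhs => rw [hdecomp]
  rw [roots_conj_diag _ hA.eigenvectorUnitary.2]
  rfl

private lemma eig_congr {M N : Matrix (Fin 4) (Fin 4) ℂ} (h : M = N) (hM : M.IsHermitian)
    (hN : N.IsHermitian) : hM.eigenvalues = hN.eigenvalues := by subst h; rfl

private lemma sv_smul (c : ℂ) (Y : Matrix (Fin 4) (Fin 4) ℂ) :
    singularValuesMultiset (c • Y) = (singularValuesMultiset Y).map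
      (fun t => ‖c‖ * t) := by
  unfold singularValuesMultiset singularValues
  rw [Multiset.map_map]
  have hmat : (c • Y)ᴴ * (c • Y) = ((Complex.normSq c : ℝ):ℂ) • (Yᴴ * Y) := by
    rw [Matrix.conjTranspose_smul, Matrix.smul_mul, Matrix.mul_smul, smul_smul]
    congr 1
    rw [Complex.star_def, Complex.normSq_eq_conj_mul_self]
  have hH : (((Complex.normSq c : ℝ):ℂ) • (Yᴴ * Y)).IsHermitian :=
    hmat ▸ Matrix.isHermitian_conjTranspose_mul_self (c • Y)
  have he : (Matrix.isHermitian_conjTranspose_mul_self (c • Y)).eigenvalues = hH.eigenvalues :=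
    eig_congr hmat _ _
  rw [show (fun i => Real.sqrt ((Matrix.isHermitian_conjTranspose_mul_self (c • Y)).eigenvalues i))
      = (fun x => Real.sqrt x) ∘ (Matrix.isHermitian_conjTranspose_mul_self (c • Y)).eigenvalues
      from rfl, ← Multiset.map_map]
  rw [he, eig_smul (Complex.normSq c) _ (Matrix.isHermitian_conjTranspose_mul_self Y) hH]
  rw [Multiset.map_map]
  congr 1
  funext i
  simp only [Function.comp]
  rw [Real.sqrt_mul (Complex.normSq_nonneg c), ← Complex.norm_def]

private lemma kron_mul (A B C D : Matrix (Fin 2) (Fin 2) ℂ) :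
    kron A B * kron C D = kron (A * C) (B * D) := by
  unfold kron
  rw [Matrix.reindex_apply, Matrix.reindex_apply, Matrix.reindex_apply,
    Matrix.submatrix_mul_equiv, Matrix.mul_kronecker_mul]

private lemma kron_transpose (A B : Matrix (Fin 2) (Fin 2) ℂ) :
    (kron A B)ᵀ = kron Aᵀ Bᵀ := by
  unfold kron
  rw [Matrix.transpose_reindex, Matrix.kroneckerMap_transpose]

private lemma kron_smul_smul (a b : ℂ) (A B : Matrix (Fin 2) (Fin 2) ℂ) :
    kron (a • A) (b • B) = (a * b) • kron A B := by
  unfold kron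
  rw [Matrix.smul_kronecker, Matrix.kronecker_smul, smul_smul]
  rfl

private lemma pauli2_conj (A : Matrix (Fin 2) (Fin 2) ℂ) :
    Aᵀ * pauli2 * A = A.det • pauli2 := by
  ext i j
  fin_cases i <;> fin_cases j <;>
    simp [pauli2, Matrix.mul_apply, Fin.sum_univ_succ, Matrix.det_fin_two] <;> ring

end AuxLemmas

/-- with `X' = (A ⊗ B) X`, the multiset of singular values of
`X'ᵀ (σ₂ ⊗ σ₂) X'` equals `|det A| · |det B|` times that of `Xᵀ (σ₂ ⊗ σ₂) X`. -/
theorem singularValues_filtering (X : Matrix (Fin 4) (Fin 4) ℂ)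
    (A B : Matrix (Fin 2) (Fin 2) ℂ) :
    singularValuesMultiset ((kron A B * X)ᵀ * kron pauli2 pauli2 * (kron A B * X)) =
      (singularValuesMultiset (Xᵀ * kron pauli2 pauli2 * X)).map
        (fun τ => ‖A.det‖ * ‖B.det‖ * τ) := by
  have key : (kron A B)ᵀ * kron pauli2 pauli2 * kron A B
      = (A.det * B.det) • kron pauli2 pauli2 := by
    rw [kron_transpose, kron_mul, kron_mul, pauli2_conj, pauli2_conj, kron_smul_smul]
  have hmain : (kron A B * X)ᵀ * kron pauli2 pauli2 * (kron A B * X)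
      = (A.det * B.det) • (Xᵀ * kron pauli2 pauli2 * X) := by
    rw [Matrix.transpose_mul]
    calc Xᵀ * (kron A B)ᵀ * kron pauli2 pauli2 * (kron A B * X)
        = Xᵀ * ((kron A B)ᵀ * kron pauli2 pauli2 * kron A B) * X := by
          simp only [Matrix.mul_assoc]
      _ = (A.det * B.det) • (Xᵀ * kron pauli2 pauli2 * X) := by
          rw [key, Matrix.mul_smul, Matrix.smul_mul, Matrix.mul_assoc]
  rw [hmain, sv_smul]
  congr 1
  funext t
  rw [norm_mul]
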